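/- In the construction below, for every subgroup H ≤ G the group Δ(H) = ⟨Fin_𝔖(T) ∪ {s_h : h ∈ H}⟩ is spherically transitive and layered; in particular, Δ(H) is a branch group. -/

import Mathlib

namespace BranchPaper

universe u

/-- Vertices at level `n` of the rooted tree defined by the sequence of alphabets `X`:
strings `x₁ ⋯ x_n` with `x_{i+1} ∈ X i` (we index alphabets from `0`). -/
abbrev Vertex (X : ℕ → Type u) (n : ℕ) : Type u := ∀ i : Fin n, X (i : ℕ)

/-- The shifted sequence of alphabets `𝔛.σⁿ`. -/
abbrev shift (X : ℕ → Type u) (n : ℕ) : ℕ → Type u := fun k => X (n + k)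

variable {X : ℕ → Type u}

/-- Compatibility of a sequence of level permutations with truncation: this is precisely
the condition for the family to define an automorphism of the rooted tree. -/
def Compat (p : ∀ n, Equiv.Perm (Vertex X n)) : Prop :=
  ∀ (n : ℕ) (v : Vertex X (n + 1)), Fin.init (p (n + 1) v) = p n (Fin.init v)

/-- The automorphism group of the rooted tree `T_X`, realised as the subgroup of
`∏ₙ Sym(L(n))` of families of layer permutations compatible with truncation. -/
def treeAutGroup (X : ℕ → Type u) : Subgroup (∀ n, Equiv.Perm (Vertex X n)) where
  carrier := {p | Compat p}
  one_mem' := fun _ _ => rfl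
  mul_mem' := by
    intro a b ha hb n v
    show Fin.init (a (n + 1) (b (n + 1) v)) = a n (b n (Fin.init v))
    rw [ha, hb]
  inv_mem' := by
    intro a ha n v
    apply (a n).injective
    show a n (Fin.init ((a (n + 1))⁻¹ v)) = a n ((a n)⁻¹ (Fin.init v))
    rw [← ha n ((a (n + 1))⁻¹ v),
      show a (n + 1) ((a (n + 1))⁻¹ v) = v from Equiv.apply_symm_apply _ v,
      show a n ((a n)⁻¹ (Fin.init v)) = Fin.init v from Equiv.apply_symm_apply _ _]

/-- `Aut(T_X)`. -/
abbrev TreeAut (X : ℕ → Type u) := ↥(treeAutGroup X)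

lemma mem_treeAutGroup {p : ∀ n, Equiv.Perm (Vertex X n)} : p ∈ treeAutGroup X ↔ Compat p :=
  Iff.rfl

lemma TreeAut.compat (g : TreeAut X) : Compat (g.1) := g.2

/-- The first `n` letters of a vertex of length `n + m`. -/
def front {n m : ℕ} (w : Vertex X (n + m)) : Vertex X n := fun i => w (Fin.castAdd m i)

/-- The last `m` letters of a vertex of length `n + m`, as a vertex of the shifted tree. -/
def back {n m : ℕ} (w : Vertex X (n + m)) : Vertex (shift X n) m := fun i => w (Fin.natAdd n i)

/-- Concatenation of a vertex of `T_X` with a vertex of the shifted tree. -/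
def append {n m : ℕ} (v : Vertex X n) (w : Vertex (shift X n) m) : Vertex X (n + m) :=
  Fin.addCases (motive := fun i => X (i : ℕ)) v w

@[simp] lemma front_append {n m : ℕ} (v : Vertex X n) (w : Vertex (shift X n) m) :
    front (append v w) = v := by
  funext i
  show Fin.addCases (motive := fun i => X (i : ℕ)) v w (Fin.castAdd m i) = v i
  exact Fin.addCases_left i

@[simp] lemma back_append {n m : ℕ} (v : Vertex X n) (w : Vertex (shift X n) m) :
    back (append v w) = w := by
  funext i
  show Fin.addCases (motive := fun i => X (i : ℕ)) v w (Fin.natAdd n i) = w i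
  exact Fin.addCases_right i

@[simp] lemma append_front_back {n m : ℕ} (w : Vertex X (n + m)) :
    append (front w) (back w) = w := by
  funext i
  induction i using Fin.addCases with
  | left i =>
      show Fin.addCases (motive := fun i => X (i : ℕ)) (front w) (back w) (Fin.castAdd m i)
        = w (Fin.castAdd m i)
      rw [Fin.addCases_left]
      rfl
  | right i =>
      show Fin.addCases (motive := fun i => X (i : ℕ)) (front w) (back w) (Fin.natAdd n i)
        = w (Fin.natAdd n i)
      rw [Fin.addCases_right]
      rfl

lemma init_append {n m : ℕ} (v : Vertex X n) (w : Vertex (shift X n) (m + 1)) :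
    Fin.init (n := n + m) (append (n := n) (m := m + 1) v w) = append v (Fin.init w) := by
  funext i
  induction i using Fin.addCases with
  | left i =>
      have h1 : Fin.addCases (motive := fun j => X (j : ℕ)) v w (Fin.castAdd (m + 1) i)
          = v i := Fin.addCases_left i
      have h2 : Fin.addCases (motive := fun j => X (j : ℕ)) v (Fin.init w) (Fin.castAdd m i)
          = v i := Fin.addCases_left i
      exact h1.trans h2.symm
  | right i =>
      have h1 : Fin.addCases (motive := fun j => X (j : ℕ)) v w (Fin.natAdd n i.castSucc)
          = w i.castSucc := Fin.addCases_right i.castSucc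
      have h2 : Fin.addCases (motive := fun j => X (j : ℕ)) v (Fin.init w) (Fin.natAdd n i)
          = Fin.init w i := Fin.addCases_right i
      exact h1.trans h2.symm

lemma front_act (g : TreeAut X) (n : ℕ) :
    ∀ (m : ℕ) (w : Vertex X (n + m)), front (g.1 (n + m) w) = g.1 n (front w) := by
  intro m
  induction m with
  | zero => intro w; rfl
  | succ m ih =>
      intro w
      calc front (g.1 (n + (m + 1)) w)
          = front (m := m) (Fin.init (n := n + m) (g.1 (n + m + 1) w)) := rfl
        _ = front (m := m) (g.1 (n + m) (Fin.init (n := n + m) w)) := by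
              rw [g.compat (n + m) w]
        _ = g.1 n (front (Fin.init (n := n + m) w)) := ih _
        _ = g.1 n (front w) := rfl

lemma coe_inv_apply (g : TreeAut X) (n : ℕ) (v : Vertex X n) :
    (g⁻¹).1 n v = (g.1 n)⁻¹ v := rfl

/-- The section `g|_v` of a tree automorphism at a vertex `v`, an automorphism of the
shifted tree, characterised by `g (v * w) = g v * (g|_v) w`. -/
def sectionAt (g : TreeAut X) {n : ℕ} (v : Vertex X n) : TreeAut (shift X n) :=
  ⟨fun m =>
    { toFun := fun w => back (g.1 (n + m) (append v w))
      invFun := fun w => back ((g⁻¹).1 (n + m) (append (g.1 n v) w))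
      left_inv := by
        intro w
        have hfront : front (g.1 (n + m) (append v w)) = g.1 n v := by
          rw [front_act, front_append]
        have key := append_front_back (g.1 (n + m) (append v w))
        rw [hfront] at key
        show back ((g⁻¹).1 (n + m) (append (g.1 n v) (back (g.1 (n + m) (append v w))))) = w
        rw [key]
        have h2 : (g⁻¹).1 (n + m) (g.1 (n + m) (append v w)) = append v w := by
          show (g.1 (n + m))⁻¹ (g.1 (n + m) (append v w)) = append v w
          exact Equiv.symm_apply_apply _ _
        rw [h2, back_append]
      right_inv := by
        intro w
        have hfront : front ((g⁻¹).1 (n + m) (append (g.1 n v) w)) = v := by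
          rw [front_act, front_append]
          show (g.1 n)⁻¹ (g.1 n v) = v
          exact Equiv.symm_apply_apply _ _
        have key := append_front_back ((g⁻¹).1 (n + m) (append (g.1 n v) w))
        rw [hfront] at key
        show back (g.1 (n + m) (append v (back ((g⁻¹).1 (n + m) (append (g.1 n v) w))))) = w
        rw [key]
        have h2 : g.1 (n + m) ((g⁻¹).1 (n + m) (append (g.1 n v) w)) = append (g.1 n v) w := by
          show g.1 (n + m) ((g.1 (n + m))⁻¹ (append (g.1 n v) w)) = append (g.1 n v) w
          exact Equiv.apply_symm_apply _ _
        rw [h2, back_append] },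
   by
    intro m w
    have h1 : Fin.init (n := n + m) (g.1 (n + m + 1) (append (n := n) (m := m + 1) v w))
        = g.1 (n + m) (Fin.init (n := n + m) (append (n := n) (m := m + 1) v w)) :=
      g.compat (n + m) (append (n := n) (m := m + 1) v w)
    calc Fin.init (back (n := n) (m := m + 1)
            (g.1 (n + (m + 1)) (append (n := n) (m := m + 1) v w)))
        = back (m := m) (Fin.init (n := n + m)
            (g.1 (n + m + 1) (append (n := n) (m := m + 1) v w))) := rfl
      _ = back (m := m) (g.1 (n + m)
            (Fin.init (n := n + m) (append (n := n) (m := m + 1) v w))) := by rw [h1]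
      _ = back (g.1 (n + m) (append v (Fin.init w))) := by rw [init_append v w]⟩

/-- An automorphism is finitary if all sections at some level are trivial. -/
def Finitary (g : TreeAut X) : Prop := ∃ n : ℕ, ∀ v : Vertex X n, sectionAt g v = 1

/-- `v` is a prefix of `w`. -/
def IsPrefixOf {n k : ℕ} (v : Vertex X n) (w : Vertex X k) : Prop :=
  ∃ h : n ≤ k, ∀ i : Fin n, w (Fin.castLE h i) = v i

/-- `g` fixes every vertex which does not have `v` as a prefix. -/
def FixesOutside (g : TreeAut X) {n : ℕ} (v : Vertex X n) : Prop :=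
  ∀ (k : ℕ) (w : Vertex X k), ¬ IsPrefixOf v w → g.1 k w = w

/-- A group of tree automorphisms acts spherically transitively if it acts transitively
on every layer. -/
def SphericallyTransitive (G : Subgroup (TreeAut X)) : Prop :=
  ∀ (n : ℕ) (v w : Vertex X n), ∃ g ∈ G, g.1 n v = w

/-- A group of tree automorphisms is layered if for every `g ∈ G` and every vertex `v`,
the insertion `ins_v (g|_v)` (the unique automorphism fixing everything outside the
subtree at `v` and with section `g|_v` at `v`) again belongs to `G`. -/
def Layered (G : Subgroup (TreeAut X)) : Prop :=
  ∀ g ∈ G, ∀ (n : ℕ) (v : Vertex X n),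
    ∃ h : TreeAut X, h ∈ G ∧ FixesOutside h v ∧ sectionAt h v = sectionAt g v

/-- The rigid vertex stabiliser of `v` in `G`. -/
def rist (G : Subgroup (TreeAut X)) {n : ℕ} (v : Vertex X n) : Subgroup (TreeAut X) where
  carrier := {g | g ∈ G ∧ FixesOutside g v}
  one_mem' := ⟨G.one_mem, fun _ _ _ => rfl⟩
  mul_mem' := by
    rintro a b ⟨haG, ha⟩ ⟨hbG, hb⟩
    refine ⟨G.mul_mem haG hbG, fun k w hw => ?_⟩
    show a.1 k (b.1 k w) = w
    rw [hb k w hw, ha k w hw]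
  inv_mem' := by
    rintro a ⟨haG, ha⟩
    refine ⟨G.inv_mem haG, fun k w hw => ?_⟩
    apply (a.1 k).injective
    show a.1 k ((a.1 k)⁻¹ w) = a.1 k w
    rw [show a.1 k ((a.1 k)⁻¹ w) = w from Equiv.apply_symm_apply _ w, ha k w hw]

/-- The rigid layer stabiliser `Rist_G(n)`, the subgroup generated by the rigid vertex
stabilisers of the vertices in layer `n`. -/
def RistL (G : Subgroup (TreeAut X)) (n : ℕ) : Subgroup (TreeAut X) :=
  Subgroup.closure (⋃ v : Vertex X n, (rist G v : Set (TreeAut X)))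

/-- A ray in the rooted tree. -/
def IsRay (u : ∀ n, Vertex X n) : Prop := ∀ n, Fin.init (u (n + 1)) = u n

/-- A `𝔲`-generalised spinal element: all sections away from the ray are finitary. -/
def GeneralisedSpinal (u : ∀ n, Vertex X n) (g : TreeAut X) : Prop :=
  ∀ (n : ℕ) (v : Vertex X n), v ≠ u n → Finitary (sectionAt g v)

section Portrait

/-- The action on layers induced by a portrait (a labelling of the vertices by
permutations of the corresponding alphabets). -/
def portraitAct (L : ∀ n, Vertex X n → Equiv.Perm (X n)) : ∀ n, Vertex X n → Vertex X n
  | 0, v => v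
  | (n + 1), v =>
      Fin.snoc (portraitAct L n (Fin.init v)) (L n (Fin.init v) (v (Fin.last n)))

lemma portraitAct_injective (L : ∀ n, Vertex X n → Equiv.Perm (X n)) :
    ∀ n, Function.Injective (portraitAct L n)
  | 0 => fun _ _ h => h
  | (n + 1) => by
      intro a b h
      simp only [portraitAct] at h
      have hinit : Fin.init a = Fin.init b := by
        apply portraitAct_injective L n
        have := congrArg Fin.init h
        simpa [Fin.init_snoc] using this
      have hlast : a (Fin.last n) = b (Fin.last n) := by
        have h2 := congrFun h (Fin.last n)
        rw [Fin.snoc_last, Fin.snoc_last, hinit] at h2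
        exact (L n (Fin.init b)).injective h2
      calc a = Fin.snoc (Fin.init a) (a (Fin.last n)) := (Fin.snoc_init_self a).symm
        _ = Fin.snoc (Fin.init b) (b (Fin.last n)) := by rw [hinit, hlast]
        _ = b := Fin.snoc_init_self b

/-- The tree automorphism determined by a portrait. -/
noncomputable def ofPortrait [∀ k, Finite (X k)] (L : ∀ n, Vertex X n → Equiv.Perm (X n)) :
    TreeAut X :=
  ⟨fun n => Equiv.ofBijective (portraitAct L n)
      (Finite.injective_iff_bijective.mp (portraitAct_injective L n)),
   by
    intro n v
    show Fin.init (portraitAct L (n + 1) v) = portraitAct L n (Fin.init v)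
    simp [portraitAct, Fin.init_snoc]⟩

end Portrait

section Construction

variable (S : ℕ → Type u)

/-- The spinal automorphism determined by a sequence `c` of group elements: it has the
rooted permutation induced by `c k` at the vertex `u_k x_{k+1}` and trivial label
everywhere else. -/
noncomputable def spinalAut [∀ k, Finite (X k)] [∀ n, Group (S n)]
    [∀ n, MulAction (S n) (X n)] (u : ∀ n, Vertex X n) (x : ∀ n, X n)
    (c : ∀ n, S (n + 1)) : TreeAut X :=
  ofPortrait (fun n => match n with
    | 0 => fun _ => 1
    | (k + 1) => fun v =>
        haveI := Classical.propDecidable (v = Fin.snoc (u k) (x k))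
        if v = Fin.snoc (u k) (x k) then MulAction.toPerm (c k) else 1)

/-- The rooted automorphism induced by an element acting on the first alphabet. -/
noncomputable def rootedAut (X : ℕ → Type u) [∀ k, Finite (X k)] {R : Type*} [Group R]
    [MulAction R (X 0)] (s : R) : TreeAut X :=
  ofPortrait (fun n => match n with
    | 0 => fun _ => MulAction.toPerm s
    | (_ + 1) => fun _ => 1)

/-- The group `Fin_𝔖(T)` of finitary automorphisms all of whose labels lie in the images
of the groups `S n` acting on the alphabets, described as a set. -/
def finSet (X : ℕ → Type u) (S : ℕ → Type u) [∀ n, Group (S n)]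
    [∀ n, MulAction (S n) (X n)] : Set (TreeAut X) :=
  {g | Finitary g ∧ ∀ (n : ℕ) (v : Vertex X n), ∃ s : S n, ∀ y : X n,
      g.1 (n + 1) (Fin.snoc v y) (Fin.last n) = s • y}

variable {G : Type u} [Group G]

/-- The branch group `Γ` of the construction. -/
noncomputable def gammaGroup [∀ k, Finite (X k)] [∀ n, Group (S n)]
    [∀ n, MulAction (S n) (X n)] (φ : G →* ∀ n, S (n + 1))
    (u : ∀ n, Vertex X n) (x : ∀ n, X n) : Subgroup (TreeAut X) :=
  Subgroup.closure
    (Set.range (fun s : S 0 => rootedAut X s) ∪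
     Set.range (fun g : G => spinalAut S u x (fun n => φ g n)))

/-- The subgroup `Δ(H) = ⟨Fin_𝔖(T) ∪ {s_h : h ∈ H}⟩`. -/
noncomputable def deltaGroup [∀ k, Finite (X k)] [∀ n, Group (S n)]
    [∀ n, MulAction (S n) (X n)] (φ : G →* ∀ n, S (n + 1))
    (u : ∀ n, Vertex X n) (x : ∀ n, X n) (H : Subgroup G) : Subgroup (TreeAut X) :=
  Subgroup.closure
    (finSet X S ∪ ((fun g : G => spinalAut S u x (fun n => φ g n)) '' (H : Set G)))

end Construction

section AuxBasic

variable {X : ℕ → Type u}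

/-- recast a vertex along an equality of lengths -/
def castV {a b : ℕ} (e : a = b) (q : Vertex X a) : Vertex X b :=
  fun i => q (Fin.cast e.symm i)

lemma treeAut_cast (g : TreeAut X) {a b : ℕ} (e : a = b) (z : Vertex X a) :
    g.1 b (castV e z) = castV e (g.1 a z) := by subst e; rfl

/-- truncation of a vertex -/
def trunc {ℓ : ℕ} (z : Vertex X ℓ) (j : ℕ) (hj : j ≤ ℓ) : Vertex X j :=
  fun i => z (Fin.castLE hj i)

lemma front_eq_trunc {n m : ℕ} (z : Vertex X (n + m)) :
    front z = trunc z n (Nat.le_add_right n m) := rfl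

lemma trunc_trunc {ℓ a b : ℕ} (z : Vertex X ℓ) (ha : a ≤ ℓ) (hb : b ≤ a) :
    trunc (trunc z a ha) b hb = trunc z b (hb.trans ha) := rfl

lemma trunc_refl {ℓ : ℕ} (z : Vertex X ℓ) : trunc z ℓ le_rfl = z := rfl

lemma trunc_init {ℓ j : ℕ} (z : Vertex X (ℓ + 1)) (hj : j ≤ ℓ) :
    trunc (Fin.init z) j hj = trunc z j (hj.trans (Nat.le_succ ℓ)) := rfl

lemma init_eq_trunc {ℓ : ℕ} (z : Vertex X (ℓ + 1)) :
    Fin.init z = trunc z ℓ (Nat.le_succ ℓ) := rfl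

lemma trunc_snoc {A j : ℕ} (z : Vertex X A) (y : X A) (h : j ≤ A) :
    trunc (Fin.snoc z y) j (h.trans (Nat.le_succ A)) = trunc z j h := by
  funext i
  show (Fin.snoc z y : Vertex X (A + 1)) (Fin.castSucc (Fin.castLE h i)) = _
  rw [Fin.snoc_castSucc]
  rfl

lemma front_apply {n m : ℕ} (z : Vertex X (n + m)) (i : Fin n) :
    front z i = z (Fin.castAdd m i) := rfl

lemma back_apply {n m : ℕ} (z : Vertex X (n + m)) (i : Fin m) :
    back z i = z (Fin.natAdd n i) := rfl

lemma append_left {n m : ℕ} (v : Vertex X n) (s : Vertex (shift X n) m)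
    (j : Fin (n + m)) (hj : j.1 < n) : append v s j = v ⟨j.1, hj⟩ :=
  congrFun (front_append v s) ⟨j.1, hj⟩

lemma append_natAdd {n m : ℕ} (v : Vertex X n) (s : Vertex (shift X n) m) (i : Fin m) :
    append v s (Fin.natAdd n i) = s i :=
  congrFun (back_append v s) i

lemma trunc_append {n m : ℕ} (v : Vertex X n) (s : Vertex (shift X n) m) :
    trunc (append v s) n (Nat.le_add_right n m) = v := front_append v s

lemma append_snoc {n m : ℕ} (v : Vertex X n) (s : Vertex (shift X n) m) (y : shift X n m) :
    append v (Fin.snoc s y) = Fin.snoc (append v s) y := by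
  funext j
  induction j using Fin.lastCases with
  | last =>
      rw [Fin.snoc_last]
      have h1 := append_natAdd v (Fin.snoc s y) (Fin.last m)
      rw [Fin.snoc_last] at h1
      exact h1
  | cast j =>
      rw [Fin.snoc_castSucc]
      induction j using Fin.addCases with
      | left i =>
          have h1 : append v (Fin.snoc s y) (Fin.castAdd (m + 1) i) = v i :=
            congrFun (front_append v (Fin.snoc s y)) i
          have h2 : append v s (Fin.castAdd m i) = v i :=
            congrFun (front_append v s) i
          exact h1.trans h2.symm
      | right i =>
          have h1 : append v (Fin.snoc s y) (Fin.natAdd n (Fin.castSucc i))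
              = (Fin.snoc s y : Vertex (shift X n) (m+1)) (Fin.castSucc i) :=
            append_natAdd v (Fin.snoc s y) (Fin.castSucc i)
          rw [Fin.snoc_castSucc] at h1
          have h2 : append v s (Fin.natAdd n i) = s i := append_natAdd v s i
          exact h1.trans h2.symm

lemma front_snoc {n m : ℕ} (q : Vertex X (n + m)) (y : X (n + m)) :
    front (n := n) (m := m+1) (Fin.snoc q y) = front q := by
  funext i
  show (Fin.snoc q y : Vertex X ((n+m)+1)) (Fin.castSucc (Fin.castAdd m i)) = _
  rw [Fin.snoc_castSucc]
  rfl

lemma back_snoc {n m : ℕ} (q : Vertex X (n + m)) (y : X (n + m)) :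
    back (n := n) (m := m+1) (Fin.snoc q y) = Fin.snoc (back q) y := by
  funext j
  induction j using Fin.lastCases with
  | last =>
      rw [Fin.snoc_last]
      show (Fin.snoc q y : Vertex X ((n+m)+1)) (Fin.last (n+m)) = y
      rw [Fin.snoc_last]
  | cast j =>
      rw [Fin.snoc_castSucc]
      show (Fin.snoc q y : Vertex X ((n+m)+1)) (Fin.castSucc (Fin.natAdd n j)) = back q j
      rw [Fin.snoc_castSucc]
      rfl

end AuxBasic
section AuxSection

variable {X : ℕ → Type u}

lemma mul_apply' (a b : TreeAut X) (L : ℕ) (z : Vertex X L) :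
    (a * b).1 L z = a.1 L (b.1 L z) := rfl

lemma one_apply' (L : ℕ) (z : Vertex X L) : (1 : TreeAut X).1 L z = z := rfl

lemma inv_apply_self' (g : TreeAut X) (L : ℕ) (z : Vertex X L) :
    g.1 L ((g⁻¹).1 L z) = z := by
  rw [coe_inv_apply]; exact Equiv.apply_symm_apply _ _

lemma self_apply_inv' (g : TreeAut X) (L : ℕ) (z : Vertex X L) :
    (g⁻¹).1 L (g.1 L z) = z := by
  rw [coe_inv_apply]; exact Equiv.symm_apply_apply _ _

lemma sectionAt_apply (g : TreeAut X) {n : ℕ} (v : Vertex X n) (m : ℕ)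
    (r : Vertex (shift X n) m) :
    (sectionAt g v).1 m r = back (g.1 (n + m) (append v r)) := rfl

lemma decomp (g : TreeAut X) (n m : ℕ) (z : Vertex X (n + m)) :
    g.1 (n + m) z = append (g.1 n (front z)) ((sectionAt g (front z)).1 m (back z)) := by
  have h1 : (sectionAt g (front z)).1 m (back z)
      = back (g.1 (n + m) (append (front z) (back z))) := rfl
  rw [append_front_back] at h1
  rw [h1, ← front_act g n m z, append_front_back]

lemma sectionAt_one {n : ℕ} (v : Vertex X n) : sectionAt (1 : TreeAut X) v = 1 := by
  apply Subtype.ext; funext m; apply Equiv.ext; intro r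
  show back (append v r) = r
  exact back_append v r

lemma sectionAt_mul (a b : TreeAut X) {n : ℕ} (v : Vertex X n) :
    sectionAt (a * b) v = sectionAt a (b.1 n v) * sectionAt b v := by
  apply Subtype.ext; funext m; apply Equiv.ext; intro r
  show back ((a * b).1 (n + m) (append v r)) = _
  rw [mul_apply', decomp b n m (append v r), front_append, back_append]
  rfl

lemma sectionAt_inv (g : TreeAut X) {n : ℕ} (v : Vertex X n) :
    sectionAt g⁻¹ v = (sectionAt g ((g⁻¹).1 n v))⁻¹ := by
  have h := sectionAt_mul g g⁻¹ v
  rw [mul_inv_cancel, sectionAt_one] at h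
  exact eq_inv_of_mul_eq_one_right h.symm

lemma isPrefixOf_same {n : ℕ} {v z : Vertex X n} : IsPrefixOf v z ↔ z = v := by
  constructor
  · rintro ⟨h, hc⟩
    funext i
    exact hc i
  · rintro rfl
    exact ⟨le_rfl, fun i => rfl⟩

lemma isPrefixOf_add {n m : ℕ} {v : Vertex X n} {z : Vertex X (n + m)} :
    IsPrefixOf v z ↔ front z = v := by
  constructor
  · rintro ⟨h, hc⟩
    funext i
    exact hc i
  · rintro rfl
    exact ⟨Nat.le_add_right n m, fun i => rfl⟩

lemma not_isPrefixOf_low {n L : ℕ} (hL : L < n) (v : Vertex X n) (z : Vertex X L) :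
    ¬ IsPrefixOf v z := fun ⟨h, _⟩ => absurd h (by omega)

lemma fixesOutside_apply_self {n : ℕ} {h : TreeAut X} {v : Vertex X n}
    (hh : FixesOutside h v) : h.1 n v = v := by
  by_contra hne
  have hw : h.1 n v ≠ v := hne
  have h1 : h.1 n (h.1 n v) = h.1 n v :=
    hh n (h.1 n v) (fun hp => hw (isPrefixOf_same.mp hp))
  exact hw ((h.1 n).injective h1)

lemma fixesOutside_mul {n : ℕ} {a b : TreeAut X} {v : Vertex X n}
    (ha : FixesOutside a v) (hb : FixesOutside b v) : FixesOutside (a * b) v := by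
  intro k w hw
  rw [mul_apply', hb k w hw, ha k w hw]

lemma fixesOutside_inv {n : ℕ} {a : TreeAut X} {v : Vertex X n}
    (ha : FixesOutside a v) : FixesOutside a⁻¹ v := by
  intro k w hw
  apply (a.1 k).injective
  rw [inv_apply_self' a k w, ha k w hw]

lemma prefix_map (g : TreeAut X) {n L : ℕ} (v : Vertex X n) (z : Vertex X L)
    (h : IsPrefixOf v z) : IsPrefixOf (g.1 n v) (g.1 L z) := by
  obtain ⟨hle, hc⟩ := h
  obtain ⟨m, rfl⟩ := Nat.le.dest hle
  have hf : front z = v := isPrefixOf_add.mp ⟨hle, hc⟩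
  exact isPrefixOf_add.mpr (by rw [front_act, hf])

lemma fixesOutside_conj {n : ℕ} {h : TreeAut X} {v : Vertex X n}
    (hh : FixesOutside h v) (f : TreeAut X) :
    FixesOutside (f * h * f⁻¹) (f.1 n v) := by
  intro L z hz
  rw [mul_apply', mul_apply']
  have h1 : ¬ IsPrefixOf v ((f⁻¹).1 L z) := by
    intro hp
    have := prefix_map f v ((f⁻¹).1 L z) hp
    rw [inv_apply_self'] at this
    exact hz this
  rw [hh L _ h1, inv_apply_self']

end AuxSection
section AuxFixBeyond

variable {X : ℕ → Type u}

/-- `g` does not move letters at positions `≥ M`. -/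
def FixBeyond (g : TreeAut X) (M : ℕ) : Prop :=
  ∀ (L : ℕ) (z : Vertex X L) (j : Fin L), M ≤ j.1 → g.1 L z j = z j

lemma fixBeyond_mono {g : TreeAut X} {M M' : ℕ} (h : M ≤ M') (hg : FixBeyond g M) :
    FixBeyond g M' := fun L z j hj => hg L z j (h.trans hj)

lemma fixBeyond_mul {a b : TreeAut X} {M : ℕ} (ha : FixBeyond a M) (hb : FixBeyond b M) :
    FixBeyond (a * b) M := by
  intro L z j hj
  rw [mul_apply', ha L _ j hj, hb L z j hj]

lemma fixBeyond_one {M : ℕ} : FixBeyond (1 : TreeAut X) M := fun _ _ _ _ => rfl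

lemma fixBeyond_inv {a : TreeAut X} {M : ℕ} (ha : FixBeyond a M) : FixBeyond a⁻¹ M := by
  intro L z j hj
  have h2 : a.1 L ((a⁻¹).1 L z) = z := inv_apply_self' a L z
  have h3 := ha L ((a⁻¹).1 L z) j hj
  exact h3.symm.trans (congrFun h2 j)

lemma fixBeyond_of_sections {g : TreeAut X} {M : ℕ}
    (h : ∀ q : Vertex X M, sectionAt g q = 1) : FixBeyond g M := by
  intro L z j hj
  have hML : M ≤ L := hj.trans j.isLt.le
  obtain ⟨m, rfl⟩ := Nat.le.dest hML
  have hz := decomp g M m z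
  rw [h (front z)] at hz
  have hz' : g.1 (M + m) z = append (g.1 M (front z)) (back z) := hz
  have hji : j = Fin.natAdd M ⟨j.1 - M, by omega⟩ :=
    Fin.ext (show j.1 = M + (j.1 - M) by omega)
  rw [hz', hji, append_natAdd]
  rfl

lemma sections_of_fixBeyond {g : TreeAut X} {M : ℕ} (h : FixBeyond g M)
    (q : Vertex X M) : sectionAt g q = 1 := by
  apply Subtype.ext; funext m; apply Equiv.ext; intro r
  show back (g.1 (M + m) (append q r)) = r
  funext i
  show g.1 (M + m) (append q r) (Fin.natAdd M i) = r i
  rw [h (M + m) (append q r) (Fin.natAdd M i) (Nat.le_add_right M i.1)]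
  exact append_natAdd q r i

lemma finitary_iff_fixBeyond {g : TreeAut X} : Finitary g ↔ ∃ M, FixBeyond g M :=
  ⟨fun ⟨M, h⟩ => ⟨M, fixBeyond_of_sections h⟩,
   fun ⟨M, h⟩ => ⟨M, sections_of_fixBeyond h⟩⟩

lemma fixBeyond_sectionAt {g : TreeAut X} {M : ℕ} (hg : FixBeyond g M) {n : ℕ}
    (v : Vertex X n) : FixBeyond (sectionAt g v) M := by
  intro L s j hj
  show g.1 (n + L) (append v s) (Fin.natAdd n j) = s j
  rw [hg (n + L) (append v s) (Fin.natAdd n j) (le_trans hj (Nat.le_add_left _ _))]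
  exact append_natAdd v s j

end AuxFixBeyond

section AuxPortrait

variable {X : ℕ → Type u}

lemma pA_def (L : ∀ n, Vertex X n → Equiv.Perm (X n)) (ℓ : ℕ) (z : Vertex X (ℓ + 1)) :
    portraitAct L (ℓ + 1) z
      = Fin.snoc (portraitAct L ℓ (Fin.init z)) (L ℓ (Fin.init z) (z (Fin.last ℓ))) := rfl

lemma pA_last (L : ∀ n, Vertex X n → Equiv.Perm (X n)) (ℓ : ℕ) (z : Vertex X (ℓ + 1)) :
    portraitAct L (ℓ + 1) z (Fin.last ℓ) = L ℓ (Fin.init z) (z (Fin.last ℓ)) := by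
  rw [pA_def, Fin.snoc_last]

lemma pA_coord (L : ∀ n, Vertex X n → Equiv.Perm (X n)) (ℓ : ℕ) :
    ∀ (z : Vertex X ℓ) (j : Fin ℓ),
      portraitAct L ℓ z j = L j.1 (trunc z j.1 j.isLt.le) (z j) := by
  induction ℓ with
  | zero => intro z j; exact j.elim0
  | succ ℓ ih =>
      intro z j
      induction j using Fin.lastCases with
      | last =>
          rw [pA_def, Fin.snoc_last]
          rfl
      | cast j =>
          rw [pA_def, Fin.snoc_castSucc]
          exact ih (Fin.init z) j

lemma ofPortrait_apply [∀ k, Finite (X k)] (L : ∀ n, Vertex X n → Equiv.Perm (X n))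
    (ℓ : ℕ) (z : Vertex X ℓ) : (ofPortrait L).1 ℓ z = portraitAct L ℓ z := rfl

lemma apply_snoc (b : TreeAut X) {ℓ : ℕ} (q : Vertex X ℓ) (y : X ℓ) :
    b.1 (ℓ + 1) (Fin.snoc q y)
      = Fin.snoc (b.1 ℓ q) (b.1 (ℓ + 1) (Fin.snoc q y) (Fin.last ℓ)) := by
  have h := (Fin.snoc_init_self (b.1 (ℓ + 1) (Fin.snoc q y))).symm
  rw [b.compat ℓ (Fin.snoc q y), Fin.init_snoc] at h
  exact h

end AuxPortrait

section AuxLabels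

variable {X : ℕ → Type u} (S : ℕ → Type u) [∀ n, Group (S n)] [∀ n, MulAction (S n) (X n)]

/-- all labels of `g` lie in the images of the `S n`. -/
def HasLabels (g : TreeAut X) : Prop :=
  ∀ (ℓ : ℕ) (q : Vertex X ℓ), ∃ s : S ℓ, ∀ y : X ℓ,
    g.1 (ℓ + 1) (Fin.snoc q y) (Fin.last ℓ) = s • y

lemma mem_finSet_iff {g : TreeAut X} :
    g ∈ finSet X S ↔ Finitary g ∧ HasLabels S g := Iff.rfl

variable {S}

lemma hasLabels_one : HasLabels S (1 : TreeAut X) :=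
  fun ℓ q => ⟨1, fun y => by rw [one_apply', Fin.snoc_last, one_smul]⟩

lemma hasLabels_mul {a b : TreeAut X} (ha : HasLabels S a) (hb : HasLabels S b) :
    HasLabels S (a * b) := by
  intro ℓ q
  obtain ⟨sb, hsb⟩ := hb ℓ q
  obtain ⟨sa, hsa⟩ := ha ℓ (b.1 ℓ q)
  refine ⟨sa * sb, fun y => ?_⟩
  rw [mul_apply']
  have h1 : b.1 (ℓ + 1) (Fin.snoc q y) = Fin.snoc (b.1 ℓ q) (sb • y) := by
    rw [apply_snoc b q y, hsb y]
  rw [h1, hsa (sb • y), mul_smul]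

lemma hasLabels_inv {a : TreeAut X} (ha : HasLabels S a) : HasLabels S a⁻¹ := by
  intro ℓ q
  obtain ⟨s, hs⟩ := ha ℓ ((a⁻¹).1 ℓ q)
  refine ⟨s⁻¹, fun y => ?_⟩
  have key : a.1 (ℓ + 1) (Fin.snoc ((a⁻¹).1 ℓ q) (s⁻¹ • y)) = Fin.snoc q y := by
    rw [apply_snoc a _ (s⁻¹ • y), hs (s⁻¹ • y), smul_inv_smul, inv_apply_self']
  rw [← key, self_apply_inv', Fin.snoc_last]

lemma hasLabels_portrait [∀ k, Finite (X k)] (σ : ∀ ℓ, Vertex X ℓ → Equiv.Perm (X ℓ))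
    (hσ : ∀ ℓ q, ∃ s : S ℓ, σ ℓ q = MulAction.toPerm s) :
    HasLabels S (ofPortrait σ) := by
  intro ℓ q
  obtain ⟨s, hs⟩ := hσ ℓ q
  refine ⟨s, fun y => ?_⟩
  rw [ofPortrait_apply, pA_last, Fin.init_snoc, Fin.snoc_last, hs]
  rfl

lemma section_labels_of_hasLabels {g : TreeAut X} (hg : HasLabels S g) {n : ℕ}
    (v : Vertex X n) : ∀ (m : ℕ) (q : Vertex (shift X n) m), ∃ s : S (n + m),
      ∀ y : shift X n m,
        (sectionAt g v).1 (m + 1) (Fin.snoc q y) (Fin.last m) = s • y := by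
  intro m q
  obtain ⟨s, hs⟩ := hg (n + m) (append v q)
  refine ⟨s, fun y => ?_⟩
  show back (g.1 (n + (m + 1)) (append v (Fin.snoc q y))) (Fin.last m) = s • y
  rw [append_snoc]
  exact hs y

end AuxLabels
section AuxIns

variable {X : ℕ → Type u}

/-- auxiliary: the new back part after insertion -/
noncomputable def insBack {n : ℕ} (w : Vertex X n) (k : TreeAut (shift X n)) (m : ℕ)
    (q : Vertex X (n + m)) : Vertex (shift X n) m :=
  @ite _ (front q = w) (Classical.propDecidable _) (k.1 m (back q)) (back q)

lemma insBack_pos {n : ℕ} (w : Vertex X n) (k : TreeAut (shift X n)) (m : ℕ)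
    (q : Vertex X (n + m)) (h : front q = w) : insBack w k m q = k.1 m (back q) := by
  unfold insBack
  split_ifs
  rfl

lemma insBack_neg {n : ℕ} (w : Vertex X n) (k : TreeAut (shift X n)) (m : ℕ)
    (q : Vertex X (n + m)) (h : ¬ front q = w) : insBack w k m q = back q := by
  unfold insBack
  split_ifs
  rfl

/-- the permutation of layer `n + m` inserting `k`'s layer-`m` permutation below `w`. -/
noncomputable def insPerm {n : ℕ} (w : Vertex X n) (k : TreeAut (shift X n)) (m : ℕ) :
    Equiv.Perm (Vertex X (n + m)) where
  toFun q := append (front q) (insBack w k m q)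
  invFun q := append (front q) (insBack w k⁻¹ m q)
  left_inv q := by
    dsimp only []
    set A := append (front q) (insBack w k m q) with hA
    have hfA : front A = front q := front_append _ _
    have hbA : back A = insBack w k m q := back_append _ _
    by_cases h : front q = w
    · rw [insBack_pos w k⁻¹ m A (by rw [hfA]; exact h), hbA,
        insBack_pos w k m q h, hfA]
      have : (k⁻¹).1 m (k.1 m (back q)) = back q := self_apply_inv' k m (back q)
      rw [this, append_front_back]
    · rw [insBack_neg w k⁻¹ m A (by rw [hfA]; exact h), hbA,
        insBack_neg w k m q h, hfA, append_front_back]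
  right_inv q := by
    dsimp only []
    set A := append (front q) (insBack w k⁻¹ m q) with hA
    have hfA : front A = front q := front_append _ _
    have hbA : back A = insBack w k⁻¹ m q := back_append _ _
    by_cases h : front q = w
    · rw [insBack_pos w k m A (by rw [hfA]; exact h), hbA,
        insBack_pos w k⁻¹ m q h, hfA]
      have : k.1 m ((k⁻¹).1 m (back q)) = back q := inv_apply_self' k m (back q)
      rw [this, append_front_back]
    · rw [insBack_neg w k m A (by rw [hfA]; exact h), hbA,
        insBack_neg w k⁻¹ m q h, hfA, append_front_back]

lemma insPerm_apply {n : ℕ} (w : Vertex X n) (k : TreeAut (shift X n)) (m : ℕ)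
    (q : Vertex X (n + m)) : insPerm w k m q = append (front q) (insBack w k m q) := rfl

lemma insPerm_front_ne {n : ℕ} (w : Vertex X n) (k : TreeAut (shift X n)) (m : ℕ)
    (q : Vertex X (n + m)) (h : front q ≠ w) : insPerm w k m q = q := by
  rw [insPerm_apply, insBack_neg w k m q h, append_front_back]

lemma insPerm_append {n : ℕ} (w : Vertex X n) (k : TreeAut (shift X n)) (m : ℕ)
    (r : Vertex (shift X n) m) : insPerm w k m (append w r) = append w (k.1 m r) := by
  rw [insPerm_apply, insBack_pos w k m _ (front_append w r), front_append, back_append]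

lemma insPerm_natAdd {n : ℕ} (w : Vertex X n) (k : TreeAut (shift X n)) (m : ℕ)
    (q : Vertex X (n + m)) (i : Fin m) :
    insPerm w k m q (Fin.natAdd n i) = insBack w k m q i :=
  append_natAdd _ _ i

lemma insPerm_low {n : ℕ} (w : Vertex X n) (k : TreeAut (shift X n)) (m : ℕ)
    (q : Vertex X (n + m)) (j : Fin (n + m)) (hj : j.1 < n) :
    insPerm w k m q j = q j := by
  have h1 : insPerm w k m q j = front q ⟨j.1, hj⟩ := append_left _ _ j hj
  rw [h1]
  rfl

lemma insPerm_zero {n : ℕ} (w : Vertex X n) (k : TreeAut (shift X n))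
    (q : Vertex X (n + 0)) : insPerm w k 0 q = q := by
  have h0 : ∀ a b : Vertex (shift X n) 0, a = b := fun a b => funext fun i => i.elim0
  rw [insPerm_apply, h0 (insBack w k 0 q) (back q), append_front_back]

lemma insPerm_compat {n : ℕ} (w : Vertex X n) (k : TreeAut (shift X n)) (m : ℕ)
    (q : Vertex X (n + (m + 1))) :
    Fin.init (insPerm w k (m + 1) q) = insPerm w k m (Fin.init q) := by
  have lhs : Fin.init (insPerm w k (m + 1) q)
      = append (front q) (Fin.init (insBack w k (m + 1) q)) :=
    init_append (front q) (insBack w k (m + 1) q)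
  refine lhs.trans ?_
  show append (front q) (Fin.init (insBack w k (m + 1) q))
      = append (front q) (insBack w k m (Fin.init q))
  suffices h2 : Fin.init (insBack w k (m + 1) q) = insBack w k m (Fin.init q) by
    rw [h2]
  have hrw : insBack w k m (Fin.init q)
      = @ite _ (front q = w) (Classical.propDecidable _)
          (k.1 m (Fin.init (back q))) (Fin.init (back q)) := rfl
  rw [hrw]
  unfold insBack
  split_ifs with hc
  · exact k.compat m (back q)
  · rfl

/-- cast equivalence between layers of equal index -/
def castEquiv {a b : ℕ} (e : a = b) : Vertex X a ≃ Vertex X b :=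
  ⟨castV e, castV e.symm, fun _ => rfl, fun _ => rfl⟩

lemma ip_cast {n : ℕ} (w : Vertex X n) (k : TreeAut (shift X n)) {m m' : ℕ} (hm : m' = m)
    (e : n + m' = n + m) (q : Vertex X (n + m)) :
    (castEquiv e).permCongr (insPerm w k m') q = insPerm w k m q := by
  subst hm; rfl

/-- the family of layer permutations of the insertion -/
noncomputable def insLevel {n : ℕ} (w : Vertex X n) (k : TreeAut (shift X n)) :
    ∀ L, Equiv.Perm (Vertex X L) := fun L =>
  if h : n ≤ L then (castEquiv (Nat.add_sub_cancel' h)).permCongr (insPerm w k (L - n))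
  else 1

lemma insLevel_add {n : ℕ} (w : Vertex X n) (k : TreeAut (shift X n)) (m : ℕ)
    (q : Vertex X (n + m)) : insLevel w k (n + m) q = insPerm w k m q := by
  have h : n ≤ n + m := Nat.le_add_right n m
  simp only [insLevel, dif_pos h]
  exact ip_cast w k (by omega) (Nat.add_sub_cancel' h) q

lemma insLevel_low {n : ℕ} (w : Vertex X n) (k : TreeAut (shift X n)) (L : ℕ)
    (h : ¬ n ≤ L) (q : Vertex X L) : insLevel w k L q = q := by
  simp only [insLevel, dif_neg h]
  rfl

/-- insertion of an automorphism of the shifted tree below the vertex `w`. -/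
noncomputable def insAut {n : ℕ} (w : Vertex X n) (k : TreeAut (shift X n)) : TreeAut X :=
  ⟨insLevel w k, by
    intro L q
    by_cases h : n ≤ L
    · obtain ⟨m, rfl⟩ := Nat.le.dest h
      have e2 : insLevel w k ((n + m) + 1) q = insPerm w k (m + 1) q :=
        insLevel_add w k (m + 1) q
      have e3 : insLevel w k (n + m) (Fin.init q) = insPerm w k m (Fin.init q) :=
        insLevel_add w k m (Fin.init q)
      rw [e2, e3]
      exact insPerm_compat w k m q
    · by_cases h1 : n ≤ L + 1
      · have hn : n = L + 1 := by omega
        subst hn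
        have e2 : insLevel w k (L + 1) q = insPerm w k 0 q := insLevel_add w k 0 q
        rw [e2, insPerm_zero, insLevel_low w k L h]
      · rw [insLevel_low w k (L + 1) h1, insLevel_low w k L h]⟩

lemma insAut_add {n : ℕ} (w : Vertex X n) (k : TreeAut (shift X n)) (m : ℕ)
    (q : Vertex X (n + m)) : (insAut w k).1 (n + m) q = insPerm w k m q :=
  insLevel_add w k m q

lemma insAut_low {n : ℕ} (w : Vertex X n) (k : TreeAut (shift X n)) (L : ℕ)
    (h : ¬ n ≤ L) (q : Vertex X L) : (insAut w k).1 L q = q :=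
  insLevel_low w k L h q

lemma insAut_fixesOutside {n : ℕ} (w : Vertex X n) (k : TreeAut (shift X n)) :
    FixesOutside (insAut w k) w := by
  intro L z hz
  by_cases h : n ≤ L
  · obtain ⟨m, rfl⟩ := Nat.le.dest h
    rw [insAut_add]
    exact insPerm_front_ne w k m z (fun hf => hz (isPrefixOf_add.mpr hf))
  · exact insAut_low w k L h z

lemma insAut_section {n : ℕ} (w : Vertex X n) (k : TreeAut (shift X n)) :
    sectionAt (insAut w k) w = k := by
  apply Subtype.ext; funext m; apply Equiv.ext; intro r
  show back ((insAut w k).1 (n + m) (append w r)) = k.1 m r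
  rw [insAut_add, insPerm_append, back_append]

lemma insAut_fixBeyond {n : ℕ} (w : Vertex X n) (k : TreeAut (shift X n)) {M : ℕ}
    (hk : FixBeyond k M) : FixBeyond (insAut w k) (n + M) := by
  intro L z j hj
  have h : n ≤ L := by have := j.isLt; omega
  obtain ⟨m, rfl⟩ := Nat.le.dest h
  rw [insAut_add]
  have hji : j = Fin.natAdd n ⟨j.1 - n, by omega⟩ :=
    Fin.ext (show j.1 = n + (j.1 - n) by omega)
  rw [hji, insPerm_natAdd]
  by_cases hf : front z = w
  · rw [insBack_pos w k m z hf]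
    rw [hk m (back z) ⟨j.1 - n, by omega⟩ (by show M ≤ j.1 - n; omega)]
    rfl
  · rw [insBack_neg w k m z hf]
    rfl

end AuxIns
section AuxInsLabels

variable {X : ℕ → Type u} {S : ℕ → Type u} [∀ n, Group (S n)] [∀ n, MulAction (S n) (X n)]

/-- label condition for automorphisms of the shifted tree -/
def ShiftLabels (S : ℕ → Type u) [∀ n, Group (S n)] [∀ n, MulAction (S n) (X n)]
    (n : ℕ) (k : TreeAut (shift X n)) : Prop :=
  ∀ (m : ℕ) (q : Vertex (shift X n) m), ∃ s : S (n + m), ∀ y : shift X n m,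
    k.1 (m + 1) (Fin.snoc q y) (Fin.last m) = s • y

lemma insAut_labels {n : ℕ} (w : Vertex X n) (k : TreeAut (shift X n))
    (hkL : ShiftLabels S n k) : HasLabels S (insAut w k) := by
  intro ℓ q
  by_cases h : n ≤ ℓ
  · obtain ⟨m, rfl⟩ := Nat.le.dest h
    by_cases hf : front q = w
    · obtain ⟨s, hs⟩ := hkL m (back q)
      refine ⟨s, fun y => ?_⟩
      have e1 : (insAut w k).1 (n + (m + 1)) (Fin.snoc q y)
          = insPerm w k (m + 1) (Fin.snoc q y) := insAut_add w k (m + 1) (Fin.snoc q y)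
      have e3 : insBack w k (m + 1) (Fin.snoc q y)
          = k.1 (m + 1) (back (Fin.snoc q y : Vertex X (n + (m + 1)))) :=
        insBack_pos w k (m + 1) (Fin.snoc q y) (by rw [front_snoc]; exact hf)
      calc (insAut w k).1 ((n + m) + 1) (Fin.snoc q y) (Fin.last (n + m))
          = insPerm w k (m + 1) (Fin.snoc q y) (Fin.natAdd n (Fin.last m)) :=
            congrFun e1 _
        _ = insBack w k (m + 1) (Fin.snoc q y) (Fin.last m) :=
            insPerm_natAdd w k (m + 1) (Fin.snoc q y) (Fin.last m)
        _ = k.1 (m + 1) (Fin.snoc (back q) y) (Fin.last m) := by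
            rw [e3, back_snoc]
        _ = s • y := hs y
    · refine ⟨1, fun y => ?_⟩
      have e1 : (insAut w k).1 (n + (m + 1)) (Fin.snoc q y)
          = insPerm w k (m + 1) (Fin.snoc q y) := insAut_add w k (m + 1) (Fin.snoc q y)
      have e2 : insPerm w k (m + 1) (Fin.snoc q y) = Fin.snoc q y :=
        insPerm_front_ne w k (m + 1) (Fin.snoc q y) (by rw [front_snoc]; exact hf)
      calc (insAut w k).1 ((n + m) + 1) (Fin.snoc q y) (Fin.last (n + m))
          = insPerm w k (m + 1) (Fin.snoc q y) (Fin.last (n + m)) := congrFun e1 _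
        _ = (Fin.snoc q y : Vertex X ((n + m) + 1)) (Fin.last (n + m)) := by rw [e2]
        _ = y := Fin.snoc_last _ _
        _ = (1 : S (n + m)) • y := (one_smul _ _).symm
  · by_cases h1 : n ≤ ℓ + 1
    · have hn : n = ℓ + 1 := by omega
      subst hn
      refine ⟨1, fun y => ?_⟩
      have e1 : (insAut w k).1 ((ℓ + 1) + 0) (Fin.snoc q y)
          = insPerm w k 0 (Fin.snoc q y) := insAut_add w k 0 (Fin.snoc q y)
      calc (insAut w k).1 (ℓ + 1) (Fin.snoc q y) (Fin.last ℓ)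
          = insPerm w k 0 (Fin.snoc q y) (Fin.last ℓ) := congrFun e1 _
        _ = (Fin.snoc q y : Vertex X (ℓ + 1)) (Fin.last ℓ) := by rw [insPerm_zero]
        _ = y := Fin.snoc_last _ _
        _ = (1 : S ℓ) • y := (one_smul _ _).symm
    · refine ⟨1, fun y => ?_⟩
      rw [insAut_low w k (ℓ + 1) h1, Fin.snoc_last, one_smul]

lemma insAut_mem_finSet {n : ℕ} (w : Vertex X n) (k : TreeAut (shift X n))
    (hkF : ∃ M, FixBeyond k M) (hkL : ShiftLabels S n k) :
    insAut w k ∈ finSet X S := by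
  obtain ⟨M, hM⟩ := hkF
  exact ⟨finitary_iff_fixBeyond.mpr ⟨n + M, insAut_fixBeyond w k hM⟩,
    insAut_labels w k hkL⟩

lemma section_shiftLabels {g : TreeAut X} (hg : HasLabels S g) {n : ℕ} (v : Vertex X n) :
    ShiftLabels S n (sectionAt g v) :=
  section_labels_of_hasLabels hg v

/-- insertion of a section of a `finSet` element at an arbitrary vertex stays in `finSet`. -/
lemma insAut_section_mem {g : TreeAut X} (hg : g ∈ finSet X S) {n : ℕ}
    (v w : Vertex X n) : insAut w (sectionAt g v) ∈ finSet X S := by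
  obtain ⟨hF, hL⟩ := hg
  obtain ⟨M, hM⟩ := finitary_iff_fixBeyond.mp hF
  exact insAut_mem_finSet w _ ⟨M, fixBeyond_sectionAt hM v⟩ (section_shiftLabels hL v)

end AuxInsLabels
section AuxMove

variable {X : ℕ → Type u} {S : ℕ → Type u} [∀ n, Group (S n)] [∀ n, MulAction (S n) (X n)]

/-- a portrait with a single (possibly) non-trivial label, at vertex `p` -/
noncomputable def oneLabel {n : ℕ} (p : Vertex X n) (s : S n) :
    ∀ ℓ, Vertex X ℓ → Equiv.Perm (X ℓ) := fun ℓ q =>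
  if h : n = ℓ then
    (haveI := Classical.propDecidable (castV h p = q)
     if castV h p = q then h ▸ MulAction.toPerm s else 1)
  else 1

lemma oneLabel_ne {n : ℕ} (p : Vertex X n) (s : S n) {ℓ : ℕ} (h : n ≠ ℓ)
    (q : Vertex X ℓ) : oneLabel p s ℓ q = 1 := by
  unfold oneLabel
  rw [dif_neg h]

lemma oneLabel_self {n : ℕ} (p : Vertex X n) (s : S n) :
    oneLabel p s n p = MulAction.toPerm s := by
  unfold oneLabel
  rw [dif_pos rfl]
  split_ifs with h
  · rfl
  · exact absurd rfl h

lemma oneLabel_toPerm {n : ℕ} (p : Vertex X n) (s : S n) :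
    ∀ (ℓ : ℕ) (q : Vertex X ℓ), ∃ t : S ℓ, oneLabel p s ℓ q = MulAction.toPerm t := by
  intro ℓ q
  by_cases h : n = ℓ
  · subst h
    by_cases h2 : p = q
    · refine ⟨s, ?_⟩
      unfold oneLabel
      rw [dif_pos rfl]
      split_ifs with h3
      · rfl
      · exact absurd h2 h3
    · refine ⟨1, ?_⟩
      unfold oneLabel
      rw [dif_pos rfl]
      split_ifs with h3
      · exact absurd h3 h2
      · exact Equiv.ext fun y => (one_smul (S n) y).symm
  · exact ⟨1, by rw [oneLabel_ne p s h q]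
                 exact Equiv.ext fun y => (one_smul (S ℓ) y).symm⟩

lemma portrait_fixBeyond [∀ k, Finite (X k)] (L : ∀ ℓ, Vertex X ℓ → Equiv.Perm (X ℓ))
    (N : ℕ) (hL : ∀ ℓ, N ≤ ℓ → ∀ q, L ℓ q = 1) : FixBeyond (ofPortrait L) N := by
  intro L' z j hj
  rw [ofPortrait_apply, pA_coord, hL j.1 hj _]
  rfl

lemma move [∀ k, Finite (X k)] (htrans : ∀ (ℓ : ℕ) (a b : X ℓ), ∃ s : S ℓ, s • a = b) :
    ∀ (n : ℕ) (v w : Vertex X n), ∃ f : TreeAut X,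
      f ∈ Subgroup.closure (finSet X S) ∧ f.1 n v = w ∧ FixBeyond f n := by
  intro n
  induction n with
  | zero =>
      intro v w
      refine ⟨1, Subgroup.one_mem _, ?_, fixBeyond_one⟩
      show v = w
      funext i; exact i.elim0
  | succ n ih =>
      intro v w
      obtain ⟨f₀, hf₀c, hf₀v, hf₀b⟩ := ih (Fin.init v) (Fin.init w)
      set b : X n := f₀.1 (n + 1) v (Fin.last n) with hb
      obtain ⟨s, hs⟩ := htrans n b (w (Fin.last n))
      set f₁ : TreeAut X := ofPortrait (oneLabel (Fin.init w) s) with hf₁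
      have hf₁fix : FixBeyond f₁ (n + 1) :=
        portrait_fixBeyond _ (n + 1) (fun ℓ hℓ q => oneLabel_ne _ _ (by omega) q)
      have hf₁mem : f₁ ∈ finSet X S :=
        ⟨finitary_iff_fixBeyond.mpr ⟨n + 1, hf₁fix⟩,
         hasLabels_portrait _ (oneLabel_toPerm (Fin.init w) s)⟩
      refine ⟨f₁ * f₀, Subgroup.mul_mem _ (Subgroup.subset_closure hf₁mem) hf₀c, ?_, ?_⟩
      · rw [mul_apply']
        have hv0 : f₀.1 (n + 1) v = Fin.snoc (Fin.init w) b := by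
          have hcompat := f₀.compat n v
          rw [hf₀v] at hcompat
          calc f₀.1 (n + 1) v
              = Fin.snoc (Fin.init (f₀.1 (n + 1) v)) (f₀.1 (n + 1) v (Fin.last n)) :=
                (Fin.snoc_init_self _).symm
            _ = Fin.snoc (Fin.init w) b := by rw [hcompat, ← hb]
        rw [hv0]
        funext j
        induction j using Fin.lastCases with
        | last =>
            rw [hf₁, ofPortrait_apply, pA_last, Fin.init_snoc, Fin.snoc_last,
              oneLabel_self]
            exact hs
        | cast j =>
            rw [hf₁, ofPortrait_apply, pA_coord,
              oneLabel_ne (Fin.init w) s (show n ≠ (Fin.castSucc j).1 by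
                rw [Fin.coe_castSucc]; have := j.isLt; omega)]
            show (Fin.snoc (Fin.init w) b : Vertex X (n + 1)) (Fin.castSucc j)
                = w (Fin.castSucc j)
            rw [Fin.snoc_castSucc]
            rfl
      · exact fixBeyond_mul hf₁fix (fixBeyond_mono (Nat.le_succ n) hf₀b)

end AuxMove
section AuxSpinal

variable {X : ℕ → Type u} (S : ℕ → Type u) [∀ n, Group (S n)] [∀ n, MulAction (S n) (X n)]
variable [∀ k, Finite (X k)]
variable (u : ∀ n, Vertex X n) (x : ∀ n, X n) (c : ∀ n, S (n + 1))

/-- the label portrait of the spinal automorphism -/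
noncomputable def sLabel : ∀ ℓ, Vertex X ℓ → Equiv.Perm (X ℓ) := fun n => match n with
  | 0 => fun _ => 1
  | (k + 1) => fun v =>
      haveI := Classical.propDecidable (v = Fin.snoc (u k) (x k))
      if v = Fin.snoc (u k) (x k) then MulAction.toPerm (c k) else 1

lemma spinalAut_eq : spinalAut S u x c = ofPortrait (sLabel S u x c) := rfl

lemma sLabel_succ (k : ℕ) (q : Vertex X (k + 1)) :
    sLabel S u x c (k + 1) q =
      (haveI := Classical.propDecidable (q = Fin.snoc (u k) (x k))
       if q = Fin.snoc (u k) (x k) then MulAction.toPerm (c k) else 1) := rfl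

variable {S u x c}

lemma sLabel_toPerm : ∀ (ℓ : ℕ) (q : Vertex X ℓ),
    ∃ t : S ℓ, sLabel S u x c ℓ q = MulAction.toPerm t := by
  intro ℓ q
  cases ℓ with
  | zero => exact ⟨1, Equiv.ext fun y => (one_smul (S 0) y).symm⟩
  | succ k =>
      by_cases h : q = Fin.snoc (u k) (x k)
      · exact ⟨c k, by rw [sLabel_succ]; split_ifs; rfl⟩
      · exact ⟨1, by rw [sLabel_succ]; split_ifs
                     exact Equiv.ext fun y => (one_smul (S (k + 1)) y).symm⟩

lemma trunc_ray (hu : IsRay u) : ∀ (n m : ℕ),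
    trunc (u (n + m)) n (Nat.le_add_right n m) = u n := by
  intro n m
  induction m with
  | zero => exact trunc_refl (u n)
  | succ m ih =>
      have h1 : trunc (u (n + (m + 1))) n (Nat.le_add_right n (m + 1))
          = trunc (Fin.init (u (n + m + 1))) n (Nat.le_add_right n m) := rfl
      rw [h1, hu (n + m)]
      exact ih

lemma trunc_ray' (hu : IsRay u) {n k : ℕ} (h : n ≤ k) : trunc (u k) n h = u n := by
  obtain ⟨m, rfl⟩ := Nat.le.dest h
  exact trunc_ray hu n m

lemma sLabel_off (hu : IsRay u) {n ℓ : ℕ} (hn1 : n + 1 ≤ ℓ) (q : Vertex X ℓ)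
    (hq : trunc q n (Nat.le_of_succ_le hn1) ≠ u n) : sLabel S u x c ℓ q = 1 := by
  cases ℓ with
  | zero => omega
  | succ k =>
      rw [sLabel_succ]
      split_ifs with h
      · exfalso
        apply hq
        have hnk : n ≤ k := by omega
        calc trunc q n (Nat.le_of_succ_le hn1)
            = trunc (Fin.snoc (u k) (x k)) n (hnk.trans (Nat.le_succ k)) := by rw [h]
          _ = trunc (u k) n hnk := trunc_snoc (u k) (x k) hnk
          _ = u n := trunc_ray' hu hnk
      · rfl

lemma spinal_coord_off (hu : IsRay u) {n L : ℕ} (hnL : n ≤ L) (z : Vertex X L)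
    (j : Fin L) (hj : n + 1 ≤ j.1) (hz : trunc z n hnL ≠ u n) :
    (spinalAut S u x c).1 L z j = z j := by
  show portraitAct (sLabel S u x c) L z j = z j
  rw [pA_coord]
  have h1 : sLabel S u x c j.1 (trunc z j.1 j.isLt.le) = 1 := sLabel_off hu hj _ hz
  rw [h1]
  rfl

lemma spinal_ins_coord (hu : IsRay u) {n : ℕ} :
    ∀ (L : ℕ) (z : Vertex X L) (j : Fin L), n + 1 ≤ j.1 →
      (insAut (u n) (sectionAt (spinalAut S u x c) (u n))).1 L z j
        = (spinalAut S u x c).1 L z j := by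
  intro L z j hj
  have hnL : n ≤ L := by have := j.isLt; omega
  obtain ⟨m, rfl⟩ := Nat.le.dest hnL
  rw [insAut_add]
  have hji : j = Fin.natAdd n ⟨j.1 - n, by omega⟩ :=
    Fin.ext (show j.1 = n + (j.1 - n) by omega)
  rw [hji, insPerm_natAdd]
  by_cases hf : front z = u n
  · rw [insBack_pos _ _ _ _ hf]
    show (spinalAut S u x c).1 (n + m) (append (u n) (back z))
        (Fin.natAdd n ⟨j.1 - n, by omega⟩) = _
    rw [← hf, append_front_back]
  · rw [insBack_neg _ _ _ _ hf]
    rw [spinal_coord_off hu (Nat.le_add_right n m) z (Fin.natAdd n ⟨j.1 - n, by omega⟩)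
      (by show n + 1 ≤ n + (j.1 - n); omega) hf]
    rfl

lemma spinal_hasLabels : HasLabels S (spinalAut S u x c) := by
  rw [spinalAut_eq]
  exact hasLabels_portrait _ sLabel_toPerm

lemma spinal_section_fixBeyond (hu : IsRay u) {n : ℕ} (v : Vertex X n) (hv : v ≠ u n) :
    FixBeyond (sectionAt (spinalAut S u x c) v) 1 := by
  intro L s j hj
  show (spinalAut S u x c).1 (n + L) (append v s) (Fin.natAdd n j) = s j
  rw [spinal_coord_off hu (Nat.le_add_right n L) (append v s) (Fin.natAdd n j)
    (by show n + 1 ≤ n + j.1; omega) (fun he => hv ((trunc_append v s).symm.trans he))]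
  exact append_natAdd v s j

lemma spinal_off_mem (hu : IsRay u) {n : ℕ} (v w : Vertex X n) (hv : v ≠ u n) :
    insAut w (sectionAt (spinalAut S u x c) v) ∈ finSet X S :=
  insAut_mem_finSet w _ ⟨1, spinal_section_fixBeyond hu v hv⟩
    (section_shiftLabels spinal_hasLabels v)

lemma spinal_diff_mem (hu : IsRay u) {n : ℕ} :
    insAut (u n) (sectionAt (spinalAut S u x c) (u n)) * (spinalAut S u x c)⁻¹
      ∈ finSet X S := by
  constructor
  · refine finitary_iff_fixBeyond.mpr ⟨n + 1, ?_⟩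
    intro L z j hj
    rw [mul_apply']
    rw [spinal_ins_coord hu L (((spinalAut S u x c)⁻¹).1 L z) j hj]
    exact congrFun (inv_apply_self' (spinalAut S u x c) L z) j
  · exact hasLabels_mul
      (insAut_labels _ _ (section_shiftLabels spinal_hasLabels (u n)))
      (hasLabels_inv spinal_hasLabels)

end AuxSpinal
section AuxMaster

variable {X : ℕ → Type u} {S : ℕ → Type u} [∀ n, Group (S n)] [∀ n, MulAction (S n) (X n)]
variable [∀ k, Finite (X k)]

lemma conj_transfer {n : ℕ} {v w : Vertex X n} (f : TreeAut X) (hfv : f.1 n v = w)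
    (hfB : FixBeyond f n) {h₁ : TreeAut X} (h₁fix : FixesOutside h₁ v) :
    FixesOutside (f * h₁ * f⁻¹) w ∧ sectionAt (f * h₁ * f⁻¹) w = sectionAt h₁ v := by
  have hinv : (f⁻¹).1 n w = v := by rw [← hfv]; exact self_apply_inv' f n v
  constructor
  · rw [← hfv]
    exact fixesOutside_conj h₁fix f
  · rw [mul_assoc, sectionAt_mul f (h₁ * f⁻¹) w]
    have h2 : (h₁ * f⁻¹).1 n w = v := by
      rw [mul_apply', hinv]
      exact fixesOutside_apply_self h₁fix
    rw [h2, sections_of_fixBeyond hfB v, one_mul,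
      sectionAt_mul h₁ f⁻¹ w, hinv,
      sections_of_fixBeyond (fixBeyond_inv hfB) w, mul_one]

variable {G : Type u} [Group G]

set_option maxHeartbeats 1000000 in
lemma masterQ (φ : G →* ∀ n, S (n + 1)) (u : ∀ n, Vertex X n) (x : ∀ n, X n)
    (hu : IsRay u) (H : Subgroup G)
    (htrans : ∀ (ℓ : ℕ) (a b : X ℓ), ∃ s : S ℓ, s • a = b) :
    ∀ g ∈ deltaGroup S φ u x H, ∀ (n : ℕ) (v w : Vertex X n),
      ∃ h : TreeAut X, h ∈ deltaGroup S φ u x H ∧ FixesOutside h w ∧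
        sectionAt h w = sectionAt g v := by
  intro g hg
  have hfinsub : finSet X S ⊆ (deltaGroup S φ u x H : Set (TreeAut X)) := fun a ha =>
    Subgroup.subset_closure (Set.mem_union_left _ ha)
  have hmove : ∀ (n : ℕ) (v w : Vertex X n), ∃ f : TreeAut X,
      f ∈ deltaGroup S φ u x H ∧ f.1 n v = w ∧ FixBeyond f n := by
    intro n v w
    obtain ⟨f, hf1, hf2, hf3⟩ := move htrans n v w
    exact ⟨f, Subgroup.closure_mono Set.subset_union_left hf1, hf2, hf3⟩
  refine Subgroup.closure_induction ?_ ?_ ?_ ?_ hg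
  · -- generators
    rintro a (haf | ⟨g0, hg0H, rfl⟩)
    · intro n v w
      refine ⟨insAut w (sectionAt a v), hfinsub (insAut_section_mem haf v w),
        insAut_fixesOutside w _, insAut_section w _⟩
    · intro n v w
      have haΔ : spinalAut S u x (fun k => φ g0 k) ∈ deltaGroup S φ u x H :=
        Subgroup.subset_closure (Set.mem_union_right _ ⟨g0, hg0H, rfl⟩)
      have h₁Δ : insAut v (sectionAt (spinalAut S u x (fun k => φ g0 k)) v)
          ∈ deltaGroup S φ u x H := by
        by_cases hv : v = u n
        · have hd : insAut v (sectionAt (spinalAut S u x (fun k => φ g0 k)) v)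
              * (spinalAut S u x (fun k => φ g0 k))⁻¹ ∈ finSet X S := by
            rw [hv]
            exact spinal_diff_mem (c := fun k => φ g0 k) hu
          have heq : (insAut v (sectionAt (spinalAut S u x (fun k => φ g0 k)) v)
              * (spinalAut S u x (fun k => φ g0 k))⁻¹)
              * spinalAut S u x (fun k => φ g0 k)
              = insAut v (sectionAt (spinalAut S u x (fun k => φ g0 k)) v) :=
            inv_mul_cancel_right _ _
          rw [← heq]
          exact Subgroup.mul_mem _ (hfinsub hd) haΔ
        · exact hfinsub (spinal_off_mem (c := fun k => φ g0 k) hu v v hv)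
      obtain ⟨f, hfΔ, hfv, hfB⟩ := hmove n v w
      obtain ⟨hcfix, hcsec⟩ := conj_transfer f hfv hfB
        (insAut_fixesOutside v (sectionAt (spinalAut S u x (fun k => φ g0 k)) v))
      exact ⟨f * insAut v (sectionAt (spinalAut S u x (fun k => φ g0 k)) v) * f⁻¹,
        Subgroup.mul_mem _ (Subgroup.mul_mem _ hfΔ h₁Δ) (Subgroup.inv_mem _ hfΔ),
        hcfix, hcsec.trans (insAut_section v _)⟩
  · -- one
    intro n v w
    exact ⟨1, Subgroup.one_mem _, fun _ _ _ => rfl,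
      by rw [sectionAt_one, sectionAt_one]⟩
  · -- mul
    intro a b _ _ pa pb n v w
    obtain ⟨h₁, h₁Δ, h₁fix, h₁sec⟩ := pa n (b.1 n v) w
    obtain ⟨h₂, h₂Δ, h₂fix, h₂sec⟩ := pb n v w
    refine ⟨h₁ * h₂, Subgroup.mul_mem _ h₁Δ h₂Δ, fixesOutside_mul h₁fix h₂fix, ?_⟩
    rw [sectionAt_mul h₁ h₂ w, fixesOutside_apply_self h₂fix, h₁sec, h₂sec,
      ← sectionAt_mul a b v]
  · -- inv
    intro a _ pa n v w
    obtain ⟨h₀, h₀Δ, h₀fix, h₀sec⟩ := pa n ((a⁻¹).1 n v) w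
    refine ⟨h₀⁻¹, Subgroup.inv_mem _ h₀Δ, fixesOutside_inv h₀fix, ?_⟩
    rw [sectionAt_inv h₀ w, fixesOutside_apply_self (fixesOutside_inv h₀fix), h₀sec,
      ← sectionAt_inv a v]

end AuxMaster
set_option maxHeartbeats 1600000 in
/-- For every subgroup `H ≤ G`, the group `Δ(H)` is spherically transitive and layered,
hence a branch group. -/
theorem statement8
    (X : ℕ → Type) [∀ n, Finite (X n)] (hX2 : ∀ n, 2 ≤ Nat.card (X n))
    (S : ℕ → Type) [∀ n, Group (S n)] [∀ n, Finite (S n)] [∀ n, MulAction (S n) (X n)]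
    (hSnt : ∀ n, Nontrivial (S n))
    (hSperf : ∀ n, commutator (S n) = ⊤)
    (hfaith : ∀ (n : ℕ) (s : S n), (∀ y : X n, s • y = y) → s = 1)
    (htrans : ∀ (n : ℕ) (a b : X n), ∃ s : S n, s • a = b)
    (hnonreg : ∀ n : ℕ, ∃ (s : S n) (y : X n), s ≠ 1 ∧ s • y = y)
    (G : Type) [Group G] (φ : G →* ∀ n, S (n + 1))
    (hφinj : Function.Injective φ)
    (hφsub : ∀ n, Function.Surjective (fun g : G => φ g n))
    (hφinf : ∀ g : G, {n : ℕ | φ g n ≠ 1}.Finite → g = 1)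
    (u : ∀ n, Vertex X n) (hu : IsRay u)
    (x : ∀ n, X n) (hx : ∀ n, Fin.snoc (u n) (x n) ≠ u (n + 1))
    (hstab : ∀ n, MulAction.stabilizer (S n) (x n)
      ≠ MulAction.stabilizer (S n) (show X n from u (n + 1) (Fin.last n))) :
    ∀ H : Subgroup G,
      SphericallyTransitive (deltaGroup S φ u x H) ∧ Layered (deltaGroup S φ u x H) ∧
      (∀ n, (RistL (deltaGroup S φ u x H) n).relIndex (deltaGroup S φ u x H) ≠ 0) := by
  intro H
  have hQ := masterQ (S := S) φ u x hu H htrans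
  refine ⟨?_, ?_, ?_⟩
  · -- spherically transitive
    intro n v w
    obtain ⟨f, hf1, hf2, _⟩ := move (S := S) htrans n v w
    exact ⟨f, Subgroup.closure_mono Set.subset_union_left hf1, hf2⟩
  · -- layered
    intro g hg n v
    exact hQ g hg n v v
  · -- rigid layer stabilisers have non-zero relative index
    intro n
    classical
    haveI hne : ∀ i, Nonempty (X i) := fun i =>
      ((Nat.card_pos_iff).mp (by have := hX2 i; omega)).1
    set ψ : TreeAut X →* Equiv.Perm (Vertex X n) :=
      (Pi.evalMonoidHom (fun k => Equiv.Perm (Vertex X k)) n).comp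
        (treeAutGroup X).subtype with hψ
    have hle : ψ.ker ⊓ deltaGroup S φ u x H ≤ RistL (deltaGroup S φ u x H) n := by
      intro g hgmem
      obtain ⟨hker, hgΔ⟩ := Subgroup.mem_inf.mp hgmem
      have hgn : ∀ q : Vertex X n, g.1 n q = q := by
        intro q
        have h1 : ψ g = 1 := MonoidHom.mem_ker.mp hker
        have h2 : g.1 n = 1 := h1
        rw [h2]; rfl
      choose h hΔ hfix hsec using fun v : Vertex X n => hQ g hgΔ n v v
      have C3 : ∀ (v : Vertex X n) (L : ℕ), L ≤ n → ∀ z : Vertex X L,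
          (h v).1 L z = z := by
        intro v L hL z
        rcases lt_or_eq_of_le hL with hlt | heq
        · exact hfix v L z (not_isPrefixOf_low hlt v z)
        · subst heq
          by_cases hz : z = v
          · rw [hz]; exact fixesOutside_apply_self (hfix v)
          · exact hfix v L z (fun hp => hz (isPrefixOf_same.mp hp))
      have C2 : ∀ (v : Vertex X n) (m : ℕ) (z : Vertex X (n + m)), front z ≠ v →
          (h v).1 (n + m) z = z := fun v m z hnev =>
        hfix v (n + m) z (fun hp => hnev (isPrefixOf_add.mp hp))
      have C4 : ∀ (v : Vertex X n) (m : ℕ) (z : Vertex X (n + m)),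
          front ((h v).1 (n + m) z) = front z := by
        intro v m z
        rw [front_act (h v) n m z, C3 v n le_rfl (front z)]
      haveI := Fintype.ofFinite (Vertex X n)
      have prodLow : ∀ (l : List (Vertex X n)) (L : ℕ), L ≤ n → ∀ z : Vertex X L,
          ((l.map h).prod).1 L z = z := by
        intro l
        induction l with
        | nil => intro L hL z; rfl
        | cons a l ih =>
            intro L hL z
            rw [List.map_cons, List.prod_cons, mul_apply', ih L hL z, C3 a L hL z]
      have prodC5 : ∀ (l : List (Vertex X n)), l.Nodup → ∀ (m : ℕ) (z : Vertex X (n + m)),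
          ((l.map h).prod).1 (n + m) z
            = if front z ∈ l then (h (front z)).1 (n + m) z else z := by
        intro l
        induction l with
        | nil =>
            intro _ m z
            rw [if_neg List.not_mem_nil]
            rfl
        | cons a l ih =>
            intro hnd m z
            obtain ⟨ha, hl⟩ := List.nodup_cons.mp hnd
            rw [List.map_cons, List.prod_cons, mul_apply', ih hl m z]
            by_cases h1 : front z ∈ l
            · rw [if_pos h1, if_pos (List.mem_cons_of_mem a h1)]
              apply C2
              rw [C4]
              exact fun he => ha (he ▸ h1)
            · rw [if_neg h1]
              by_cases h2 : front z = a
              · rw [if_pos (List.mem_cons.mpr (Or.inl h2)), h2]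
              · rw [C2 a m z h2,
                  if_neg (fun hmem => (List.mem_cons.mp hmem).elim h2 h1)]
      have gfixlow : ∀ (L : ℕ), L ≤ n → ∀ z : Vertex X L, g.1 L z = z := by
        intro L hL z
        obtain ⟨m, e⟩ := Nat.le.dest hL
        let r : Vertex (shift X L) m := fun i => Classical.arbitrary _
        have h1 : g.1 (L + m) (append z r) = append z r := by
          apply (castEquiv (X := X) e).injective
          show castV e (g.1 (L + m) (append z r)) = castV e (append z r)
          rw [← treeAut_cast g e (append z r)]
          exact hgn (castV e (append z r))
        calc g.1 L z = g.1 L (front (append z r)) := by rw [front_append]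
          _ = front (g.1 (L + m) (append z r)) := (front_act g L m (append z r)).symm
          _ = front (append z r) := by rw [h1]
          _ = z := front_append z r
      have C6 : g = (((Finset.univ : Finset (Vertex X n)).toList).map h).prod := by
        apply Subtype.ext; funext L; apply Equiv.ext; intro z
        show g.1 L z = ((((Finset.univ : Finset (Vertex X n)).toList).map h).prod).1 L z
        rcases Nat.lt_or_ge L n with hL | hL
        · rw [gfixlow L hL.le z, prodLow _ L hL.le z]
        · obtain ⟨m, rfl⟩ := Nat.le.dest hL
          rw [prodC5 _ (Finset.nodup_toList _) m z,
            if_pos (Finset.mem_toList.mpr (Finset.mem_univ _))]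
          rw [decomp g n m z, decomp (h (front z)) n m z, hgn (front z),
            C3 (front z) n le_rfl (front z), hsec (front z)]
      rw [C6]
      refine Subgroup.list_prod_mem _ (fun y hy => ?_)
      obtain ⟨v, _, rfl⟩ := List.mem_map.mp hy
      exact Subgroup.subset_closure (Set.mem_iUnion.mpr ⟨v, ⟨hΔ v, hfix v⟩⟩)
    have h2 : (ψ.ker ⊓ deltaGroup S φ u x H).relIndex (deltaGroup S φ u x H)
        = Nat.card ((deltaGroup S φ u x H).map ψ) := by
      rw [Subgroup.inf_relIndex_right, Subgroup.relIndex_ker]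
    have h3 : Nat.card ((deltaGroup S φ u x H).map ψ) ≠ 0 :=
      Nat.card_ne_zero.mpr ⟨⟨⟨1, Subgroup.one_mem _⟩⟩, inferInstance⟩
    have hdvd := Subgroup.relIndex_dvd_of_le_left (deltaGroup S φ u x H) hle
    intro h0
    apply h3
    rw [← h2]
    exact Nat.eq_zero_of_zero_dvd (h0 ▸ hdvd)

end BranchPaper
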